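/- In the audit-log model, the set of currently valid permissions at time t is exactly determined by the event log: a grantee g has valid access to record r at time t iff there is a PermissionGranted(r, g, e) event in the log with t < e, and no PermissionRevoked(r, g) event occurring after that grant event, where each grant overwrites the previous permission state for (r,g). -/
import Mathlib


structure Permission where
  expiration : ℕ
  revoked : Bool

def hasValidPermission (p : Permission) (t : ℕ) : Prop :=
  p.revoked = false ∧ 0 < p.expiration ∧ t < p.expiration

inductive Event
  | Grant (rid grantee expiration : ℕ)
  | Revoke (rid grantee : ℕ)
deriving DecidableEq

/-- One step of log replay: grants overwrite, revokes mark the existing entry revoked. -/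
def applyEvent (m : ℕ × ℕ → Option Permission) : Event → (ℕ × ℕ → Option Permission)
  | Event.Grant r g e => fun k => if k = (r, g) then some ⟨e, false⟩ else m k
  | Event.Revoke r g =>
      fun k => if k = (r, g) then (m k).map (fun p => { p with revoked := true }) else m k

/-- Replay a log from the empty permission map. -/
def replay (L : List Event) : ℕ × ℕ → Option Permission :=
  L.foldl applyEvent (fun _ => none)

lemma replay_concat (L : List Event) (ev : Event) :
    replay (L ++ [ev]) = applyEvent (replay L) ev := by
  simp [replay, List.foldl_append]

lemma concat_eq (L₁ L₂ M : List Event) (x ev : Event)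
    (h : L₁ ++ [x] ++ L₂ = M ++ [ev]) :
    (L₂ = [] ∧ L₁ = M ∧ x = ev) ∨
      ∃ L₂', L₂ = L₂' ++ [ev] ∧ M = L₁ ++ [x] ++ L₂' := by
  induction L₂ using List.reverseRecOn with
  | nil =>
    left
    simp only [List.append_nil] at h
    have := List.append_inj' h rfl
    exact ⟨rfl, this.1, by simpa using this.2⟩
  | append_singleton ys y _ =>
    right
    rw [show L₁ ++ [x] ++ (ys ++ [y]) = (L₁ ++ [x] ++ ys) ++ [y] by simp] at h
    have := List.append_inj' h rfl
    exact ⟨ys, by simp [List.cons_eq_cons] at this ⊢; tauto, this.1.symm⟩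

/-- The valid permissions are exactly determined by the log: grantee `g` has valid
access to record `r` at time `t` iff the log decomposes around a `Grant r g e` event
with `t < e` followed by no revoke and no later grant for `(r, g)`. -/
theorem stmt8 (L : List Event) (r g t : ℕ) :
    (∃ p : Permission, replay L (r, g) = some p ∧ hasValidPermission p t) ↔
    (∃ (L₁ L₂ : List Event) (e : ℕ),
      L = L₁ ++ [Event.Grant r g e] ++ L₂ ∧ t < e ∧
      Event.Revoke r g ∉ L₂ ∧ ∀ e' : ℕ, Event.Grant r g e' ∉ L₂) := by
  induction L using List.reverseRecOn with
  | nil =>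
    simp only [replay, List.foldl_nil]
    constructor
    · rintro ⟨p, hp, -⟩; cases hp
    · rintro ⟨L₁, L₂, e, hL, -⟩
      exact absurd hL (by simp)
  | append_singleton M ev ih =>
    rw [replay_concat]
    cases ev with
    | Grant r' g' e' =>
      by_cases hk : ((r, g) : ℕ × ℕ) = (r', g')
      · obtain ⟨rfl, rfl⟩ : r' = r ∧ g' = g := by
          simpa [Prod.ext_iff, eq_comm] using hk
        simp only [applyEvent, if_pos rfl, if_true]
        constructor
        · rintro ⟨p, hp, hv⟩
          obtain rfl : (⟨e', false⟩ : Permission) = p := by injection hp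
          exact ⟨M, [], e', by simp, hv.2.2, by simp, by simp⟩
        · rintro ⟨L₁, L₂, e, hL, hte, hrev, hgr⟩
          rcases concat_eq L₁ L₂ M _ _ hL.symm with ⟨-, -, hx⟩ | ⟨L₂', hL₂, -⟩
          · injection hx with h1 h2 h3
            subst h3
            exact ⟨⟨e, false⟩, rfl, rfl, Nat.lt_of_le_of_lt (Nat.zero_le t) hte, hte⟩
          · exact absurd (hL₂ ▸ List.mem_append_right _ (by simp)) (hgr e')
      · simp only [applyEvent, if_neg hk]
        rw [ih]
        constructor
        · rintro ⟨L₁, L₂, e, hL, hte, hrev, hgr⟩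
          refine ⟨L₁, L₂ ++ [Event.Grant r' g' e'], e, by simp [hL], hte, ?_, ?_⟩
          · simp [hrev]
          · intro e'' h
            rcases List.mem_append.1 h with h | h
            · exact hgr e'' h
            · simp at h
              exact hk (by simp [h.1, h.2.1])
        · rintro ⟨L₁, L₂, e, hL, hte, hrev, hgr⟩
          rcases concat_eq L₁ L₂ M _ _ hL.symm with ⟨-, -, hx⟩ | ⟨L₂', hL₂, hM⟩
          · exfalso
            injection hx with h1 h2 h3
            exact hk (by simp [h1, h2])
          · refine ⟨L₁, L₂', e, hM, hte, fun h => hrev (hL₂ ▸ List.mem_append_left _ h),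
              fun e'' h => hgr e'' (hL₂ ▸ List.mem_append_left _ h)⟩
    | Revoke r' g' =>
      by_cases hk : ((r, g) : ℕ × ℕ) = (r', g')
      · obtain ⟨rfl, rfl⟩ : r' = r ∧ g' = g := by
          simpa [Prod.ext_iff, eq_comm] using hk
        simp only [applyEvent, if_pos rfl, if_true]
        constructor
        · rintro ⟨p, hp, hv⟩
          rw [Option.map_eq_some_iff] at hp
          obtain ⟨q, -, rfl⟩ := hp
          exact absurd hv.1 (by simp)
        · rintro ⟨L₁, L₂, e, hL, hte, hrev, hgr⟩
          rcases concat_eq L₁ L₂ M _ _ hL.symm with ⟨-, -, hx⟩ | ⟨L₂', hL₂, -⟩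
          · exact Event.noConfusion hx
          · exact absurd (hL₂ ▸ List.mem_append_right _ (by simp)) hrev
      · simp only [applyEvent, if_neg hk]
        rw [ih]
        constructor
        · rintro ⟨L₁, L₂, e, hL, hte, hrev, hgr⟩
          refine ⟨L₁, L₂ ++ [Event.Revoke r' g'], e, by simp [hL], hte, ?_, ?_⟩
          · intro h
            rcases List.mem_append.1 h with h | h
            · exact hrev h
            · simp at h
              exact hk (by simp [h.1, h.2])
          · intro e'' h
            rcases List.mem_append.1 h with h | h
            · exact hgr e'' h
            · simp at h
        · rintro ⟨L₁, L₂, e, hL, hte, hrev, hgr⟩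
          rcases concat_eq L₁ L₂ M _ _ hL.symm with ⟨-, -, hx⟩ | ⟨L₂', hL₂, hM⟩
          · exact Event.noConfusion hx
          · refine ⟨L₁, L₂', e, hM, hte, fun h => hrev (hL₂ ▸ List.mem_append_left _ h),
              fun e'' h => hgr e'' (hL₂ ▸ List.mem_append_left _ h)⟩
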